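/- arXiv:1903.05055 — 3 statements merged into one kernel-verified Lean document; each statement's English description precedes it below -/
import Mathlib

section
/- Fix an integer k ≥ 0 and ε > 0, and let p ≤ n^{-1/(k+1)-ε}. If X is a random clique complex distributed as X(n,p), then with high probability every strongly connected, pure (k+1)-dimensional subcomplex S of X has a vertex of degree at most 2k+1 in S. -/
/-! If every vertex of `S` has degree at least `2k + 2`, then either `S` has few vertices and, by
the handshake lemma, its `q` vertices span at least `(k + 1) q` edges, or `S` has many vertices and
strong connectivity lets one grow a set of `k + 2 + a` vertices spanning at least `(k + 1) a`
edges: start from a facet and repeatedly cross a ridge to a facet with a new vertex, which is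
joined to the `k + 1` vertices of the ridge. For `p ≤ n ^ (-1/(k+1) - ε)` the expected number of
such vertex sets is `O(n ^ (q - m/(k+1) - ε m))` for `q` vertices and `m` edges, which tends to
zero once `a` is large. -/

open Finset

/-! Basic definitions for finite abstract simplicial complexes, viewed as
downward-closed families of nonempty finite sets of vertices. -/

variable {V : Type*} [DecidableEq V]

/-- `K` is an abstract simplicial complex: every face is nonempty, and `K` is
closed under taking nonempty subsets. -/
def IsComplex (K : Set (Finset V)) : Prop :=
  (∀ σ ∈ K, σ.Nonempty) ∧ ∀ σ ∈ K, ∀ τ : Finset V, τ ⊆ σ → τ.Nonempty → τ ∈ K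

/-- `τ` is a maximal face (facet) of `K`. -/
def IsMaximalFace (K : Set (Finset V)) (τ : Finset V) : Prop :=
  τ ∈ K ∧ ∀ η ∈ K, τ ⊆ η → η = τ

/-- `σ` is a free face of the maximal face `τ` in `K`: `σ ⊊ τ`, `τ` is maximal,
and `τ` is the only maximal face of `K` containing `σ`. -/
def IsFreeFace (K : Set (Finset V)) (σ τ : Finset V) : Prop :=
  σ ∈ K ∧ IsMaximalFace K τ ∧ σ ⊂ τ ∧
    ∀ η : Finset V, IsMaximalFace K η → σ ⊆ η → η = τ

/-- One simplicial collapse: remove all faces `η` with `σ ⊆ η ⊆ τ`, where `σ` is a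
free face of `τ`. -/
def CollapseStep (K K' : Set (Finset V)) : Prop :=
  ∃ σ τ : Finset V, IsFreeFace K σ τ ∧ K' = K \ {η | σ ⊆ η ∧ η ⊆ τ}

/-- `K` collapses to `K'` by a finite sequence of simplicial collapses. -/
def CollapsesTo (K K' : Set (Finset V)) : Prop :=
  Relation.ReflTransGen CollapseStep K K'

/-- `K` is `k`-collapsible: it collapses to a complex of dimension at most `k - 1`,
i.e. in which every face has at most `k` vertices. -/
def Collapsible (k : ℕ) (K : Set (Finset V)) : Prop :=
  ∃ K' : Set (Finset V), CollapsesTo K K' ∧ ∀ σ ∈ K', σ.card ≤ k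

/-- `K` is a clique (flag) complex: it is a simplicial complex, and any nonempty
finite vertex set whose 1-skeleton (vertices and edges) lies in `K` is a face of `K`. -/
def IsCliqueComplex (K : Set (Finset V)) : Prop :=
  IsComplex K ∧ ∀ σ : Finset V, σ.Nonempty →
    (∀ τ : Finset V, τ ⊆ σ → τ.Nonempty → τ.card ≤ 2 → τ ∈ K) → σ ∈ K

/-- The flag closure of `S`: add every simplex whose 1-skeleton lies in `S`;
equivalently, the clique complex of the 1-skeleton of `S`. -/
def flagClosure (S : Set (Finset V)) : Set (Finset V) :=
  S ∪ {σ : Finset V | σ.Nonempty ∧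
    ∀ τ : Finset V, τ ⊆ σ → τ.Nonempty → τ.card ≤ 2 → τ ∈ S}

/-- `S` is pure `d`-dimensional: it is nonempty and all its maximal faces have
dimension `d` (i.e. `d + 1` vertices). -/
def IsPure (S : Set (Finset V)) (d : ℕ) : Prop :=
  S.Nonempty ∧ ∀ τ : Finset V, IsMaximalFace S τ → τ.card = d + 1

/-- Two `d`-dimensional faces of `S` are adjacent if they share a `(d-1)`-dimensional face. -/
def FacetAdj (S : Set (Finset V)) (d : ℕ) (σ τ : Finset V) : Prop :=
  σ ∈ S ∧ τ ∈ S ∧ σ.card = d + 1 ∧ τ.card = d + 1 ∧ (σ ∩ τ).card = d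

/-- A pure `d`-dimensional complex is strongly connected if any two `d`-faces are
joined by a chain of `d`-faces in which consecutive faces share a `(d-1)`-face. -/
def StronglyConnected (S : Set (Finset V)) (d : ℕ) : Prop :=
  ∀ σ ∈ S, ∀ τ ∈ S, σ.card = d + 1 → τ.card = d + 1 →
    Relation.ReflTransGen (FacetAdj S d) σ τ

/-- A relevant `d`-subcomplex of `X`: a subcomplex that is pure `d`-dimensional
and strongly connected. -/
def IsRelevant (X S : Set (Finset V)) (d : ℕ) : Prop :=
  S ⊆ X ∧ IsComplex S ∧ IsPure S d ∧ StronglyConnected S d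

/-- A maximal relevant `d`-subcomplex of `X`: a relevant `d`-subcomplex not properly
contained in any other relevant `d`-subcomplex of `X`. -/
def IsMaxRelevant (X S : Set (Finset V)) (d : ℕ) : Prop :=
  IsRelevant X S d ∧ ∀ T : Set (Finset V), IsRelevant X T d → S ⊆ T → T = S

/-- The degree of a vertex `v` in `S`: the number of vertices adjacent to `v`
in the 1-skeleton of `S`. -/
noncomputable def degreeIn (S : Set (Finset V)) (v : V) : ℕ :=
  {w : V | w ≠ v ∧ ({v, w} : Finset V) ∈ S}.ncard

/-- The link of a vertex `v` in `K`. -/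
def link (K : Set (Finset V)) (v : V) : Set (Finset V) :=
  {σ : Finset V | σ ∈ K ∧ v ∉ σ ∧ insert v σ ∈ K}

/-- The star of a face `σ` in `K`. -/
def star (K : Set (Finset V)) (σ : Finset V) : Set (Finset V) :=
  {τ ∈ K | σ ⊆ τ}

/-- The vertex support of `S`. -/
def vsupp (S : Set (Finset V)) : Set V := {v : V | ∃ σ ∈ S, v ∈ σ}

open scoped ENNReal

/-! Random clique complexes: the Erdős–Rényi random graph and its clique complex. -/

/-- The graph on `Fin n` determined by an indicator of edges. -/
def graphOf {n : ℕ} (ω : Sym2 (Fin n) → Bool) : SimpleGraph (Fin n) :=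
  SimpleGraph.fromRel (fun u v => ω s(u, v) = true)

/-- The clique complex of a graph `G`: faces are the nonempty finite cliques of `G`. -/
def cliqueComplexOf {W : Type*} (G : SimpleGraph W) : Set (Finset W) :=
  {σ : Finset W | σ.Nonempty ∧ G.IsClique (σ : Set W)}

/-- The Erdős–Rényi measure `G(n,p)`: each of the possible edges on `{1, …, n}`
appears independently with probability `p`. -/
noncomputable def erdosRenyi (n : ℕ) (p : ℝ≥0∞) (hp : p ≤ 1) :
    MeasureTheory.Measure (Sym2 (Fin n) → Bool) :=
  MeasureTheory.Measure.pi fun _ => (PMF.ofFintype (fun b => cond b p (1 - p)) (by simp [hp])).toMeasure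

open Filter MeasureTheory Topology

def SimpleGraph.HasDenseSet (G : SimpleGraph V) (q m : ℕ) : Prop :=
  ∃ U : Finset V, U.card = q ∧ ∃ E ⊆ U.sym2, m ≤ E.card ∧ (E : Set (Sym2 V)) ⊆ G.edgeSet

theorem Relation.ReflTransGen.exists_rel_of_not {α : Type*} {r : α → α → Prop} {P : α → Prop}
    {a b : α} (h : Relation.ReflTransGen r a b) (ha : P a) (hb : ¬ P b) :
    ∃ x y, r x y ∧ P x ∧ ¬ P y := by
  induction h with
  | refl => exact absurd ha hb
  | @tail c d _ hcd ih =>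
    by_cases hc : P c
    · exact ⟨c, d, hcd, hc, hb⟩
    · exact ih hc

def oneSkeleton (S : Set (Finset V)) : SimpleGraph V where
  Adj v w := v ≠ w ∧ ({v, w} : Finset V) ∈ S
  symm := ⟨fun v w h => ⟨h.1.symm, Finset.pair_comm v w ▸ h.2⟩⟩
  loopless := ⟨fun _ h => h.1 rfl⟩

@[simp]
theorem oneSkeleton_adj {S : Set (Finset V)} {v w : V} :
    (oneSkeleton S).Adj v w ↔ v ≠ w ∧ ({v, w} : Finset V) ∈ S :=
  Iff.rfl

section Complex

variable {S : Set (Finset V)} {G : SimpleGraph V}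

theorem degreeIn_eq_degree (S : Set (Finset V)) (v : V)
    [Fintype ((oneSkeleton S).neighborSet v)] : degreeIn S v = (oneSkeleton S).degree v := by
  rw [degreeIn, ← SimpleGraph.card_neighborFinset_eq_degree, ← Set.ncard_coe_finset,
    SimpleGraph.coe_neighborFinset]
  congr 1
  ext w
  simp only [Set.mem_ofPred_eq, SimpleGraph.mem_neighborSet, oneSkeleton_adj]
  exact and_congr_left' ne_comm

theorem oneSkeleton_le (hSG : S ⊆ cliqueComplexOf G) : oneSkeleton S ≤ G :=
  fun v w h => (hSG h.2).2 (by simp) (by simp) h.1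

theorem mem_vsupp_of_oneSkeleton_adj {v w : V} (h : (oneSkeleton S).Adj v w) : v ∈ vsupp S :=
  ⟨_, h.2, Finset.mem_insert_self v _⟩

omit [DecidableEq V] in
theorem IsComplex.singleton_mem {v : V} (hS : IsComplex S) (hv : v ∈ vsupp S) :
    ({v} : Finset V) ∈ S := by
  obtain ⟨σ, hσ, hvσ⟩ := hv
  exact hS.2 σ hσ {v} (Finset.singleton_subset_iff.2 hvσ) (Finset.singleton_nonempty v)

omit [DecidableEq V] in
theorem IsPure.vsupp_nonempty {d : ℕ} (hS : IsComplex S) (hpure : IsPure S d) :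
    (vsupp S).Nonempty := by
  obtain ⟨σ, hσ⟩ := hpure.1
  obtain ⟨v, hv⟩ := hS.1 σ hσ
  exact ⟨v, σ, hσ, hv⟩

/-- Handshake lemma for the 1-skeleton. -/
theorem hasDenseSet_of_le_degreeIn [Fintype V] (hS : IsComplex S) (hSG : S ⊆ cliqueComplexOf G)
    {r : ℕ} (hdeg : ∀ v, ({v} : Finset V) ∈ S → 2 * r ≤ degreeIn S v) :
    G.HasDenseSet (vsupp S).ncard (r * (vsupp S).ncard) := by
  classical
  set H := oneSkeleton S
  refine ⟨(vsupp S).toFinset, (Set.ncard_eq_toFinset_card' _).symm, H.edgeFinset, ?_, ?_, ?_⟩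
  · intro e he
    induction e using Sym2.ind with
    | h v w =>
      have hvw : H.Adj v w := SimpleGraph.mem_edgeFinset.1 he
      exact Finset.mk_mem_sym2_iff.2 ⟨Set.mem_toFinset.2 (mem_vsupp_of_oneSkeleton_adj hvw),
        Set.mem_toFinset.2 (mem_vsupp_of_oneSkeleton_adj hvw.symm)⟩
  · have : 2 * (r * (vsupp S).toFinset.card) ≤ 2 * H.edgeFinset.card :=
      calc 2 * (r * (vsupp S).toFinset.card) = ∑ _v ∈ (vsupp S).toFinset, 2 * r := by
            rw [Finset.sum_const, smul_eq_mul]; ring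
        _ ≤ ∑ v ∈ (vsupp S).toFinset, H.degree v := Finset.sum_le_sum fun v hv => by
            rw [← degreeIn_eq_degree]
            exact hdeg v (hS.singleton_mem (Set.mem_toFinset.1 hv))
        _ ≤ ∑ v, H.degree v := Finset.sum_le_sum_of_subset (Finset.subset_univ _)
        _ = 2 * H.edgeFinset.card := H.sum_degrees_eq_twice_card_edges
    rw [Set.ncard_eq_toFinset_card']
    omega
  · rw [SimpleGraph.coe_edgeFinset]
    exact SimpleGraph.edgeSet_mono (oneSkeleton_le hSG)

omit [DecidableEq V] in
theorem IsPure.exists_superset_card [Finite V] {d : ℕ} (hpure : IsPure S d) {σ : Finset V}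
    (hσ : σ ∈ S) : ∃ τ ∈ S, σ ⊆ τ ∧ τ.card = d + 1 := by
  obtain ⟨τ, hτ, hmax⟩ := Set.Finite.exists_maximalFor Finset.card {η ∈ S | σ ⊆ η}
    (Set.toFinite _) ⟨σ, hσ, subset_rfl⟩
  refine ⟨τ, hτ.1, hτ.2, hpure.2 τ ⟨hτ.1, fun η hη hτη => ?_⟩⟩
  have := hmax ⟨hη, hτ.2.trans hτη⟩ (Finset.card_le_card hτη)
  exact (Finset.eq_of_subset_of_card_le hτη this).symm

/-- A chain of adjacent `d`-faces from `σ ⊆ U` to a face meeting the outside of `U` must leave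
`U` through a face `β` sharing `d` vertices of `U` with its predecessor; any vertex of `β` outside
`U` is joined to those `d` vertices. -/
theorem exists_adj_outside [Finite V] {d : ℕ} (hSG : S ⊆ cliqueComplexOf G) (hpure : IsPure S d)
    (hsc : StronglyConnected S d) {σ U : Finset V} (hσ : σ ∈ S) (hσd : σ.card = d + 1)
    (hσU : σ ⊆ U) {u : V} (hu : u ∈ vsupp S) (huU : u ∉ U) :
    ∃ w ∈ vsupp S, w ∉ U ∧ ∃ T ⊆ U, T.card = d ∧ ∀ a ∈ T, G.Adj a w := by
  obtain ⟨ρ, hρ, huρ⟩ := hu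
  obtain ⟨τ, hτ, hρτ, hτd⟩ := hpure.exists_superset_card hρ
  obtain ⟨α, β, ⟨-, hβ, -, -, hαβ⟩, hαU, hβU⟩ :=
    (hsc σ hσ τ hτ hσd hτd).exists_rel_of_not (P := (· ⊆ U)) hσU
      (fun h => huU (h (hρτ huρ)))
  obtain ⟨w, hwβ, hwU⟩ := Finset.not_subset.1 hβU
  refine ⟨w, ⟨β, hβ, hwβ⟩, hwU, α ∩ β, Finset.inter_subset_left.trans hαU, hαβ,
    fun a ha => ?_⟩
  have haU : a ∈ U := hαU (Finset.mem_inter.1 ha).1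
  exact (hSG hβ).2 (Finset.mem_inter.1 ha).2 hwβ (fun h => hwU (h ▸ haU))

theorem exists_dense_superset [Finite V] {d : ℕ} (hSG : S ⊆ cliqueComplexOf G)
    (hpure : IsPure S d) (hsc : StronglyConnected S d) {σ : Finset V} (hσ : σ ∈ S)
    (hσd : σ.card = d + 1) :
    ∀ t, d + 1 + t ≤ (vsupp S).ncard → ∃ U : Finset V, σ ⊆ U ∧ ↑U ⊆ vsupp S ∧
      U.card = d + 1 + t ∧ ∃ E ⊆ U.sym2, d * t ≤ E.card ∧ (E : Set (Sym2 V)) ⊆ G.edgeSet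
  | 0, _ => ⟨σ, subset_rfl, fun v hv => ⟨σ, hσ, hv⟩, hσd, ∅, Finset.empty_subset _, by simp,
      by simp⟩
  | t + 1, ht => by
    obtain ⟨U, hσU, hUS, hUcard, E, hEU, hEcard, hEG⟩ :=
      exists_dense_superset hSG hpure hsc hσ hσd t (by omega)
    obtain ⟨u, hu, huU⟩ := Set.exists_mem_notMem_of_ncard_lt_ncard
      (s := (U : Set V)) (t := vsupp S) (by rw [Set.ncard_coe_finset]; omega)
    obtain ⟨w, hw, hwU, T, hTU, hTcard, hTw⟩ :=
      exists_adj_outside hSG hpure hsc hσ hσd hσU hu huU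
    have hnew : Disjoint E (T.image (s(·, w))) := by
      refine Finset.disjoint_right.2 fun e he heE => ?_
      obtain ⟨a, -, rfl⟩ := Finset.mem_image.1 he
      exact hwU (Finset.mk_mem_sym2_iff.1 (hEU heE)).2
    refine ⟨insert w U, hσU.trans (Finset.subset_insert _ _), ?_, ?_,
      E ∪ T.image (s(·, w)), ?_, ?_, ?_⟩
    · rw [Finset.coe_insert]
      exact Set.insert_subset hw hUS
    · rw [Finset.card_insert_of_notMem hwU, hUcard, add_assoc]
    · refine Finset.union_subset (hEU.trans (Finset.sym2_mono (Finset.subset_insert _ _))) ?_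
      intro e he
      obtain ⟨a, ha, rfl⟩ := Finset.mem_image.1 he
      exact Finset.mk_mem_sym2_iff.2
        ⟨Finset.mem_insert_of_mem (hTU ha), Finset.mem_insert_self _ _⟩
    · rw [Finset.card_union_of_disjoint hnew,
        Finset.card_image_of_injective _ (fun a b h => Sym2.congr_left.1 h), hTcard]
      rw [mul_add, mul_one]
      omega
    · rw [Finset.coe_union, Set.union_subset_iff, Finset.coe_image]
      refine ⟨hEG, ?_⟩
      rintro _ ⟨a, ha, rfl⟩
      exact hTw a ha

theorem hasDenseSet_of_stronglyConnected [Finite V] {d : ℕ} (hSG : S ⊆ cliqueComplexOf G)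
    (hpure : IsPure S d) (hsc : StronglyConnected S d) {t : ℕ}
    (ht : d + 1 + t ≤ (vsupp S).ncard) : G.HasDenseSet (d + 1 + t) (d * t) := by
  obtain ⟨ρ, hρ⟩ := hpure.1
  obtain ⟨σ, hσ, -, hσd⟩ := hpure.exists_superset_card hρ
  obtain ⟨U, -, -, hU, hE⟩ := exists_dense_superset hSG hpure hsc hσ hσd t ht
  exact ⟨U, hU, hE⟩

end Complex

theorem hasDenseSet_of_forall_lt_degreeIn [Fintype V] {S : Set (Finset V)} {G : SimpleGraph V}
    {k : ℕ} (hSG : S ⊆ cliqueComplexOf G) (hS : IsComplex S) (hpure : IsPure S (k + 1))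
    (hsc : StronglyConnected S (k + 1))
    (hdeg : ∀ v, ({v} : Finset V) ∈ S → 2 * k + 1 < degreeIn S v) (a : ℕ) :
    G.HasDenseSet (k + 2 + a) ((k + 1) * a) ∨
      ∃ q ∈ Finset.Ico 1 (k + 2 + a), G.HasDenseSet q ((k + 1) * q) := by
  by_cases hbig : k + 2 + a ≤ (vsupp S).ncard
  · exact Or.inl (hasDenseSet_of_stronglyConnected hSG hpure hsc hbig)
  · have hpos : 0 < (vsupp S).ncard :=
      Set.ncard_pos (Set.toFinite _) |>.2 (hpure.vsupp_nonempty hS)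
    refine Or.inr ⟨_, Finset.mem_Ico.2 ⟨hpos, by omega⟩, hasDenseSet_of_le_degreeIn hS hSG ?_⟩
    intro v hv
    have := hdeg v hv
    omega

section ErdosRenyi

variable {n : ℕ}

instance isProbabilityMeasure_erdosRenyi (p : ℝ≥0∞) (hp : p ≤ 1) :
    IsProbabilityMeasure (erdosRenyi n p hp) := by
  unfold erdosRenyi
  infer_instance

theorem eq_true_of_mem_edgeSet_graphOf {ω : Sym2 (Fin n) → Bool} {e : Sym2 (Fin n)}
    (he : e ∈ (graphOf ω).edgeSet) : ω e = true := by
  induction e using Sym2.ind with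
  | h a b =>
    rw [SimpleGraph.mem_edgeSet, graphOf, SimpleGraph.fromRel_adj] at he
    rcases he.2 with h | h
    · exact h
    · rwa [Sym2.eq_swap]

theorem erdosRenyi_cylinder (p : ℝ≥0∞) (hp : p ≤ 1) (E : Finset (Sym2 (Fin n))) :
    erdosRenyi n p hp {ω | ∀ e ∈ E, ω e = true} = p ^ E.card := by
  classical
  have hpi : {ω : Sym2 (Fin n) → Bool | ∀ e ∈ E, ω e = true} =
      Set.pi Set.univ fun e => if e ∈ E then {true} else Set.univ := by
    ext ω
    simp only [Set.mem_ofPred_eq, Set.mem_pi, Set.mem_univ, true_imp_iff]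
    refine forall_congr' fun e => ?_
    split_ifs with he <;> simp [he]
  rw [hpi, erdosRenyi, Measure.pi_pi]
  have hfactor : ∀ e, (PMF.ofFintype (fun b => cond b p (1 - p)) (by simp [hp])).toMeasure
      (if e ∈ E then {true} else Set.univ) = if e ∈ E then p else 1 := by
    intro e
    split_ifs
    · exact PMF.toMeasure_apply_singleton _ _ (measurableSet_singleton _)
    · exact measure_univ
  simp_rw [hfactor]
  rw [Finset.prod_ite_mem, Finset.univ_inter, Finset.prod_const]

theorem erdosRenyi_hasDenseSet_le (p : ℝ≥0∞) (hp : p ≤ 1) (q m : ℕ) :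
    erdosRenyi n p hp {ω | (graphOf ω).HasDenseSet q m} ≤
      ((n.choose q * ((q + 1).choose 2).choose m : ℕ) : ℝ≥0∞) * p ^ m := by
  have hcover : {ω : Sym2 (Fin n) → Bool | (graphOf ω).HasDenseSet q m} ⊆
      ⋃ U ∈ Finset.powersetCard q Finset.univ, ⋃ E ∈ Finset.powersetCard m U.sym2,
        {ω | ∀ e ∈ E, ω e = true} := by
    rintro ω ⟨U, hU, E, hEU, hmE, hEG⟩
    obtain ⟨E', hE'E, hE'⟩ := Finset.exists_subset_card_eq hmE
    simp only [Set.mem_iUnion, Finset.mem_powersetCard, exists_prop]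
    exact ⟨U, ⟨Finset.subset_univ _, hU⟩, E', ⟨hE'E.trans hEU, hE'⟩,
      fun e he => eq_true_of_mem_edgeSet_graphOf (hEG (hE'E he))⟩
  calc _ ≤ _ := measure_mono hcover
    _ ≤ ∑ U ∈ Finset.powersetCard q Finset.univ, ∑ E ∈ Finset.powersetCard m U.sym2,
          erdosRenyi n p hp {ω | ∀ e ∈ E, ω e = true} :=
      (measure_biUnion_finset_le _ _).trans
        (Finset.sum_le_sum fun _ _ => measure_biUnion_finset_le _ _)
    _ = ∑ U ∈ Finset.powersetCard q Finset.univ,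
          ∑ _E ∈ Finset.powersetCard m U.sym2, p ^ m := by
      refine Finset.sum_congr rfl fun U _ => Finset.sum_congr rfl fun E hE => ?_
      rw [erdosRenyi_cylinder, (Finset.mem_powersetCard.1 hE).2]
    _ = _ := by
      rw [Finset.sum_congr rfl fun U hU => by
        rw [Finset.sum_const, Finset.card_powersetCard, Finset.card_sym2,
          (Finset.mem_powersetCard.1 hU).2]]
      simp only [Finset.sum_const, Finset.card_powersetCard, Finset.card_univ,
        Fintype.card_fin, nsmul_eq_mul]
      push_cast
      ring

end ErdosRenyi

theorem tendsto_natCast_rpow_atTop_zero {x : ℝ} (hx : x < 0) :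
    Tendsto (fun n : ℕ => (n : ℝ≥0∞) ^ x) atTop (𝓝 0) := by
  have hreal : Tendsto (fun n : ℕ => ENNReal.ofReal ((n : ℝ) ^ x)) atTop (𝓝 0) := by
    simpa [Function.comp_def] using (ENNReal.continuous_ofReal.tendsto 0).comp
      ((neg_neg x ▸ tendsto_rpow_neg_atTop (neg_pos.2 hx)).comp tendsto_natCast_atTop_atTop)
  refine hreal.congr' ?_
  filter_upwards [eventually_ne_atTop 0] with n hn
  rw [← ENNReal.ofReal_rpow_of_pos (by positivity), ENNReal.ofReal_natCast]

theorem natCast_pow_mul_pow_le_rpow {n : ℕ} (hn : n ≠ 0) {p : ℝ≥0∞} {c : ℝ}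
    (hp : p ≤ (n : ℝ≥0∞) ^ c) (q m : ℕ) :
    (n : ℝ≥0∞) ^ q * p ^ m ≤ (n : ℝ≥0∞) ^ ((q : ℝ) + c * m) := by
  rw [ENNReal.rpow_add _ _ (by exact_mod_cast hn) (ENNReal.natCast_ne_top n),
    ENNReal.rpow_natCast, ENNReal.rpow_mul, ENNReal.rpow_natCast]
  gcongr

/-- First moment method: the expected number of `q`-sets spanning `m` edges is at most a constant
times `n ^ q * p ^ m ≤ n ^ (q + c m)`. -/
theorem tendsto_erdosRenyi_hasDenseSet_zero {p : ℕ → ℝ≥0∞} (hp1 : ∀ n, p n ≤ 1) {c : ℝ}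
    (hp : ∀ n : ℕ, p n ≤ (n : ℝ≥0∞) ^ c) {q m : ℕ} (hqm : (q : ℝ) + c * m < 0) :
    Tendsto (fun n => erdosRenyi n (p n) (hp1 n) {ω | (graphOf ω).HasDenseSet q m})
      atTop (𝓝 0) := by
  set C : ℕ := ((q + 1).choose 2).choose m
  have hbound : Tendsto (fun n : ℕ => (C : ℝ≥0∞) * (n : ℝ≥0∞) ^ ((q : ℝ) + c * m))
      atTop (𝓝 0) := by
    simpa using ENNReal.Tendsto.const_mul (tendsto_natCast_rpow_atTop_zero hqm)
      (Or.inr (ENNReal.natCast_ne_top C))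
  refine tendsto_of_tendsto_of_tendsto_of_le_of_le' tendsto_const_nhds hbound
    (Eventually.of_forall fun _ => zero_le) ?_
  filter_upwards [eventually_ne_atTop 0] with n hn
  calc _ ≤ ((n.choose q * C : ℕ) : ℝ≥0∞) * p n ^ m := erdosRenyi_hasDenseSet_le _ _ q m
    _ ≤ C * ((n : ℝ≥0∞) ^ q * p n ^ m) := by
      rw [Nat.cast_mul, mul_comm (n.choose q : ℝ≥0∞), mul_assoc]
      gcongr
      exact_mod_cast Nat.choose_le_pow n q
    _ ≤ _ := by
      gcongr
      exact natCast_pow_mul_pow_le_rpow hn (hp n) q m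

theorem tendsto_erdosRenyi_exists_hasDenseSet_zero {k a : ℕ} {ε : ℝ}
    (ha : (k : ℝ) + 2 < a * ((k + 1) * ε)) {p : ℕ → ℝ≥0∞} (hp1 : ∀ n, p n ≤ 1)
    (hp : ∀ n : ℕ, p n ≤ (n : ℝ≥0∞) ^ (-(1 / ((k : ℝ) + 1)) - ε)) :
    Tendsto (fun n => erdosRenyi n (p n) (hp1 n)
      {ω | (graphOf ω).HasDenseSet (k + 2 + a) ((k + 1) * a) ∨
        ∃ q ∈ Finset.Ico 1 (k + 2 + a), (graphOf ω).HasDenseSet q ((k + 1) * q)})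
      atTop (𝓝 0) := by
  have hexp : ∀ q m : ℕ, (q : ℝ) + (-(1 / ((k : ℝ) + 1)) - ε) * ((k + 1) * m : ℕ) =
      (q : ℝ) - m - (k + 1) * ε * m := by
    intro q m
    push_cast
    field_simp
    ring
  have hlarge := tendsto_erdosRenyi_hasDenseSet_zero hp1 hp (q := k + 2 + a)
    (m := (k + 1) * a) (by rw [hexp]; push_cast; linarith)
  have hsmall := tendsto_finsetSum (Finset.Ico 1 (k + 2 + a)) fun q hq =>
    tendsto_erdosRenyi_hasDenseSet_zero hp1 hp (q := q) (m := (k + 1) * q) (by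
      have : (1 : ℝ) ≤ q := by exact_mod_cast (Finset.mem_Ico.1 hq).1
      rw [hexp]
      nlinarith)
  refine tendsto_of_tendsto_of_tendsto_of_le_of_le tendsto_const_nhds
    (by simpa using hlarge.add hsmall) (fun _ => zero_le) fun n => ?_
  refine (measure_mono fun ω hω => ?_).trans ((measure_union_le _ _).trans
    (add_le_add le_rfl (measure_biUnion_finset_le _ _)))
  rcases hω with h | ⟨q, hq, h⟩
  · exact Or.inl h
  · exact Or.inr (Set.mem_biUnion hq h)

/-- Fix `k ≥ 0` and `ε > 0`, and let `p ≤ n^(-1/(k+1) - ε)`. Then with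
high probability, every strongly connected, pure `(k+1)`-dimensional subcomplex `S` of the
random clique complex `X(n,p)` has a vertex of degree at most `2k + 1` in `S`. -/
theorem random_clique_complex_degree_condition (k : ℕ) (ε : ℝ) (hε : 0 < ε)
    (p : ℕ → ℝ≥0∞) (hp1 : ∀ n, p n ≤ 1)
    (hp : ∀ n : ℕ, p n ≤ (n : ℝ≥0∞) ^ (-(1 / ((k : ℝ) + 1)) - ε)) :
    Filter.Tendsto
      (fun n : ℕ => erdosRenyi n (p n) (hp1 n)
        {ω : Sym2 (Fin n) → Bool |
          ∀ S : Set (Finset (Fin n)), S ⊆ cliqueComplexOf (graphOf ω) → IsComplex S →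
            IsPure S (k + 1) → StronglyConnected S (k + 1) →
            ∃ v : Fin n, ({v} : Finset (Fin n)) ∈ S ∧ degreeIn S v ≤ 2 * k + 1})
      Filter.atTop (nhds 1) := by
  obtain ⟨a, ha⟩ := exists_nat_gt (((k : ℝ) + 2) / (((k : ℝ) + 1) * ε))
  rw [div_lt_iff₀ (by positivity)] at ha
  have hcompl := ENNReal.Tendsto.sub (tendsto_const_nhds (x := (1 : ℝ≥0∞)))
    (tendsto_erdosRenyi_exists_hasDenseSet_zero ha hp1 hp) (Or.inl ENNReal.one_ne_top)
  rw [tsub_zero] at hcompl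
  refine tendsto_of_tendsto_of_tendsto_of_le_of_le hcompl tendsto_const_nhds (fun n => ?_)
    (fun _ => prob_le_one)
  rw [← prob_compl_eq_one_sub MeasurableSet.of_discrete]
  refine measure_mono fun ω hω S hSG hS hpure hsc => ?_
  by_contra! hdeg
  exact hω (hasDenseSet_of_forall_lt_degreeIn hSG hS hpure hsc hdeg a)
end

section
/- Let X be a finite clique complex and let S₁, S₂ ⊆ X be two distinct maximal relevant (k+1)-subcomplexes. Then dim(S₁ ∩ S₂) ≤ k − 1. -/
open Finset

/-! Basic definitions for finite abstract simplicial complexes, viewed as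
downward-closed families of nonempty finite sets of vertices. -/

variable {V : Type*} [DecidableEq V]

/-
Two facets (with `k + 2` vertices) of `S₁` and `S₂` through a common face with `k + 1`
vertices share at least a `k`-face, so they are equal or adjacent. Strong connectivity then
passes to `S₁ ∪ S₂`, which is again a relevant `(k+1)`-subcomplex; maximality forces
`S₁ = S₁ ∪ S₂ = S₂`.
-/

section Faces

variable {V : Type*} {S T : Set (Finset V)} {d : ℕ}

lemma IsPure.exists_superset_card_eq (hS : IsPure S d) (hfin : S.Finite) {σ : Finset V}
    (hσ : σ ∈ S) : ∃ τ ∈ S, σ ⊆ τ ∧ τ.card = d + 1 := by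
  obtain ⟨τ, ⟨hτS, hστ⟩, hmax⟩ := Set.Finite.exists_maximalFor Finset.card
    {τ ∈ S | σ ⊆ τ} (hfin.subset fun _ h => h.1) ⟨σ, hσ, subset_rfl⟩
  have hτmax : IsMaximalFace S τ := ⟨hτS, fun η hη hτη =>
    (eq_of_subset_of_card_le hτη (hmax ⟨hη, hστ.trans hτη⟩ (card_le_card hτη))).symm⟩
  exact ⟨τ, hτS, hστ, hS.2 τ hτmax⟩

lemma IsComplex.union (hS : IsComplex S) (hT : IsComplex T) : IsComplex (S ∪ T) := by
  refine ⟨fun σ hσ => hσ.elim (hS.1 σ) (hT.1 σ), ?_⟩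
  rintro σ (hσ | hσ) τ hτσ hτ
  exacts [.inl (hS.2 σ hσ τ hτσ hτ), .inr (hT.2 σ hσ τ hτσ hτ)]

lemma IsPure.union (hS : IsPure S d) (hT : IsPure T d) : IsPure (S ∪ T) d := by
  refine ⟨hS.1.mono Set.subset_union_left, ?_⟩
  rintro τ ⟨hτ | hτ, hmax⟩
  · exact hS.2 τ ⟨hτ, fun η hη => hmax η (.inl hη)⟩
  · exact hT.2 τ ⟨hτ, fun η hη => hmax η (.inr hη)⟩

end Faces

section Relevant

variable {V : Type*} [DecidableEq V] {S T X : Set (Finset V)} {d : ℕ}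

lemma FacetAdj.mono (hST : S ⊆ T) {σ τ : Finset V} (h : FacetAdj S d σ τ) :
    FacetAdj T d σ τ :=
  ⟨hST h.1, hST h.2.1, h.2.2⟩

instance : Std.Symm (FacetAdj S d) where
  symm _ _ := fun ⟨hσ, hτ, hσc, hτc, hστ⟩ => ⟨hτ, hσ, hτc, hσc, by rwa [inter_comm]⟩

lemma reflTransGen_facetAdj_of_le_card_inter {σ τ : Finset V} (hσ : σ ∈ S) (hτ : τ ∈ S)
    (hσc : σ.card = d + 1) (hτc : τ.card = d + 1) (hστ : d ≤ (σ ∩ τ).card) :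
    Relation.ReflTransGen (FacetAdj S d) σ τ := by
  by_cases hcard : (σ ∩ τ).card = d
  · exact .single ⟨hσ, hτ, hσc, hτc, hcard⟩
  · have hστ_sub : σ ⊆ τ := inter_eq_left.mp <| eq_of_subset_of_card_le inter_subset_left (by omega)
    rw [eq_of_subset_of_card_le hστ_sub (by omega)]

lemma StronglyConnected.union (hS : StronglyConnected S d) (hT : StronglyConnected T d)
    {σ₀ τ₀ : Finset V} (hσ₀ : σ₀ ∈ S) (hτ₀ : τ₀ ∈ T) (hσ₀c : σ₀.card = d + 1)
    (hτ₀c : τ₀.card = d + 1) (hbridge : Relation.ReflTransGen (FacetAdj (S ∪ T) d) σ₀ τ₀) :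
    StronglyConnected (S ∪ T) d := by
  have lift {U : Set (Finset V)} (hU : U ⊆ S ∪ T) {σ τ : Finset V}
      (h : Relation.ReflTransGen (FacetAdj U d) σ τ) :
      Relation.ReflTransGen (FacetAdj (S ∪ T) d) σ τ :=
    Relation.ReflTransGen.mono (fun _ _ => FacetAdj.mono hU) _ _ h
  have to_σ₀ : ∀ σ ∈ S ∪ T, σ.card = d + 1 →
      Relation.ReflTransGen (FacetAdj (S ∪ T) d) σ σ₀ := by
    rintro σ (hσ | hσ) hσc
    · exact lift Set.subset_union_left (hS σ hσ σ₀ hσ₀ hσc hσ₀c)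
    · exact (lift Set.subset_union_right (hT σ hσ τ₀ hτ₀ hσc hτ₀c)).trans
        (Std.Symm.symm _ _ hbridge)
  intro σ hσ τ hτ hσc hτc
  exact (to_σ₀ σ hσ hσc).trans (Std.Symm.symm _ _ (to_σ₀ τ hτ hτc))

lemma IsRelevant.union (hS : IsRelevant X S d) (hT : IsRelevant X T d) {σ τ : Finset V}
    (hσ : σ ∈ S) (hτ : τ ∈ T) (hσc : σ.card = d + 1) (hτc : τ.card = d + 1)
    (hστ : d ≤ (σ ∩ τ).card) : IsRelevant X (S ∪ T) d :=
  ⟨Set.union_subset hS.1 hT.1, hS.2.1.union hT.2.1, hS.2.2.1.union hT.2.2.1,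
    hS.2.2.2.union hT.2.2.2 hσ hτ hσc hτc
      (reflTransGen_facetAdj_of_le_card_inter (.inl hσ) (.inr hτ) hσc hτc hστ)⟩

lemma IsRelevant.exists_superset_card_eq (hS : IsRelevant X S d) (hX : X.Finite)
    {σ : Finset V} (hσ : σ ∈ S) : ∃ τ ∈ S, σ ⊆ τ ∧ τ.card = d + 1 :=
  hS.2.2.1.exists_superset_card_eq (hX.subset hS.1) hσ

end Relevant

theorem dim_inter_maxRelevant_le_general {V : Type*} [DecidableEq V]
    (k : ℕ) (X S₁ S₂ : Set (Finset V)) (hfin : X.Finite)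
    (h1 : IsMaxRelevant X S₁ (k + 1)) (h2 : IsMaxRelevant X S₂ (k + 1)) (hne : S₁ ≠ S₂) :
    ∀ σ ∈ S₁ ∩ S₂, σ.card ≤ k := by
  rintro σ ⟨hσ₁, hσ₂⟩
  by_contra! hcard
  obtain ⟨τ₁, hτ₁, hστ₁, hτ₁c⟩ := h1.1.exists_superset_card_eq hfin hσ₁
  obtain ⟨τ₂, hτ₂, hστ₂, hτ₂c⟩ := h2.1.exists_superset_card_eq hfin hσ₂
  have hinter : k + 1 ≤ (τ₁ ∩ τ₂).card :=
    hcard.trans_le (card_le_card (subset_inter hστ₁ hστ₂))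
  have hunion := h1.1.union h2.1 hτ₁ hτ₂ hτ₁c hτ₂c hinter
  exact hne ((h1.2 _ hunion Set.subset_union_left).symm.trans
    (h2.2 _ hunion Set.subset_union_right))

/-- Distinct maximal relevant `(k+1)`-subcomplexes of a finite clique
complex intersect in dimension at most `k - 1`: every common face has at most `k` vertices. -/
theorem dim_inter_maxRelevant_le {V : Type*} [DecidableEq V]
    (k : ℕ) (X S₁ S₂ : Set (Finset V)) (hX : IsCliqueComplex X) (hfin : X.Finite)
    (h1 : IsMaxRelevant X S₁ (k + 1)) (h2 : IsMaxRelevant X S₂ (k + 1)) (hne : S₁ ≠ S₂) :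
    ∀ σ ∈ S₁ ∩ S₂, σ.card ≤ k :=
  dim_inter_maxRelevant_le_general k X S₁ S₂ hfin h1 h2 hne
end

section
/- Fix k ≥ 0, and let X be a finite clique complex such that every maximal relevant (k+1)-subcomplex of X consists of a single (k+1)-dimensional face together with its subfaces (equivalently, is supported on exactly k+2 vertices). Then X is (k+1)-collapsible. -/
open Finset

/-! Basic definitions for finite abstract simplicial complexes, viewed as
downward-closed families of nonempty finite sets of vertices. -/

variable {V : Type*} [DecidableEq V]

/-!
Two `(k+1)`-faces of `X` sharing a `k`-face span a strongly connected pure `(k+1)`-complex on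
`k + 3` vertices. It lies in a maximal relevant subcomplex, which by hypothesis has only `k + 2`
vertices; so no two `(k+1)`-faces share a `k`-face. A face on `k + 3` vertices would contain two
such `(k+1)`-faces, so `X` has dimension at most `k + 1`. Hence every `k`-face of a `(k+1)`-face
`τ` is free in `τ`, and the `(k+1)`-faces can be collapsed away one at a time.
-/

section DownClosure

omit [DecidableEq V]

def downClosure (F : Set (Finset V)) : Set (Finset V) :=
  {η | η.Nonempty ∧ ∃ τ ∈ F, η ⊆ τ}

lemma isComplex_downClosure (F : Set (Finset V)) : IsComplex (downClosure F) :=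
  ⟨fun _ hη => hη.1, fun _ ⟨_, τ, hτ, hητ⟩ _ hρ hρne => ⟨hρne, τ, hτ, hρ.trans hητ⟩⟩

lemma downClosure_subset {X F : Set (Finset V)} (hX : IsComplex X) (hFX : F ⊆ X) :
    downClosure F ⊆ X :=
  fun η ⟨hη, τ, hτ, hητ⟩ => hX.2 τ (hFX hτ) η hητ hη

lemma subset_downClosure {F : Set (Finset V)} (hF : ∀ τ ∈ F, τ.Nonempty) :
    F ⊆ downClosure F :=
  fun τ hτ => ⟨hF τ hτ, τ, hτ, subset_rfl⟩

end DownClosure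

lemma isRelevant_downClosure {X F : Set (Finset V)} {d : ℕ} (hX : IsComplex X) (hFX : F ⊆ X)
    (hF : F.Nonempty) (hcard : ∀ τ ∈ F, τ.card = d + 1)
    (hadj : F.Pairwise fun τ₁ τ₂ => (τ₁ ∩ τ₂).card = d) :
    IsRelevant X (downClosure F) d := by
  have hFne : ∀ τ ∈ F, τ.Nonempty := fun τ hτ => card_pos.mp (by rw [hcard τ hτ]; omega)
  have hmemF : ∀ η ∈ downClosure F, η.card = d + 1 → η ∈ F := by
    rintro η ⟨-, τ, hτ, hητ⟩ hη
    rwa [eq_of_subset_of_card_le hητ (by rw [hη, hcard τ hτ])]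
  refine ⟨downClosure_subset hX hFX, isComplex_downClosure F, ⟨?_, ?_⟩, ?_⟩
  · obtain ⟨τ, hτ⟩ := hF
    exact ⟨τ, subset_downClosure hFne hτ⟩
  · rintro η ⟨⟨-, τ, hτ, hητ⟩, hmax⟩
    rw [← hmax τ (subset_downClosure hFne hτ) hητ, hcard τ hτ]
  · intro α hα β hβ hαc hβc
    rcases eq_or_ne α β with rfl | hne
    · exact .refl
    · exact .single ⟨hα, hβ, hαc, hβc, hadj (hmemF α hα hαc) (hmemF β hβ hβc) hne⟩

lemma IsRelevant.exists_isMaxRelevant_superset {X S : Set (Finset V)} {d : ℕ}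
    (hfin : X.Finite) (hS : IsRelevant X S d) : ∃ T, IsMaxRelevant X T d ∧ S ⊆ T := by
  have hF : {T : Set (Finset V) | IsRelevant X T d ∧ S ⊆ T}.Finite :=
    hfin.finite_subsets.subset fun T hT => hT.1.1
  obtain ⟨T, ⟨hT, hST⟩, hTmax⟩ := hF.exists_maximalFor id _ ⟨S, hS, subset_rfl⟩
  exact ⟨T, ⟨hT, fun T' hT' hTT' => subset_antisymm (hTmax ⟨hT', hST.trans hTT'⟩ hTT') hTT'⟩,
    hST⟩

section SmallMaxRelevant

variable {X : Set (Finset V)} {d : ℕ}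

lemma eq_of_card_inter_of_maxRelevant (hX : IsComplex X) (hfin : X.Finite)
    (hmax : ∀ S, IsMaxRelevant X S d → ∃ σ : Finset V, σ.card = d + 1 ∧ ∀ η ∈ S, η ⊆ σ)
    {τ₁ τ₂ : Finset V} (h₁ : τ₁ ∈ X) (h₂ : τ₂ ∈ X) (hc₁ : τ₁.card = d + 1)
    (hc₂ : τ₂.card = d + 1) (hinter : (τ₁ ∩ τ₂).card = d) : τ₁ = τ₂ := by
  have hrel : IsRelevant X (downClosure {τ₁, τ₂}) d :=
    isRelevant_downClosure hX (Set.insert_subset_iff.2 ⟨h₁, Set.singleton_subset_iff.2 h₂⟩)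
      (Set.insert_nonempty _ _) (by simp [hc₁, hc₂])
      (Set.pairwise_pair.2 fun _ => ⟨hinter, by rwa [inter_comm]⟩)
  obtain ⟨T, hT, hST⟩ := hrel.exists_isMaxRelevant_superset hfin
  obtain ⟨σ, hσ, hTσ⟩ := hmax T hT
  have heq : ∀ τ ∈ ({τ₁, τ₂} : Set (Finset V)), τ.card = d + 1 → τ = σ := fun τ hτ hτc =>
    eq_of_subset_of_card_le (hTσ τ (hST ⟨card_pos.mp (by omega), τ, hτ, subset_rfl⟩))
      (by omega)
  exact (heq τ₁ (by simp) hc₁).trans (heq τ₂ (by simp) hc₂).symm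

lemma card_inter_lt_of_maxRelevant (hX : IsComplex X) (hfin : X.Finite)
    (hmax : ∀ S, IsMaxRelevant X S d → ∃ σ : Finset V, σ.card = d + 1 ∧ ∀ η ∈ S, η ⊆ σ)
    {τ₁ τ₂ : Finset V} (h₁ : τ₁ ∈ X) (h₂ : τ₂ ∈ X) (hc₁ : τ₁.card = d + 1)
    (hc₂ : τ₂.card = d + 1) (hne : τ₁ ≠ τ₂) : (τ₁ ∩ τ₂).card < d := by
  have hle : (τ₁ ∩ τ₂).card ≤ d + 1 := hc₁ ▸ card_le_card inter_subset_left
  have hne_d : (τ₁ ∩ τ₂).card ≠ d :=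
    fun h => hne (eq_of_card_inter_of_maxRelevant hX hfin hmax h₁ h₂ hc₁ hc₂ h)
  have hne_succ : (τ₁ ∩ τ₂).card ≠ d + 1 := fun h => hne <|
    (eq_of_subset_of_card_le inter_subset_left (by omega)).symm.trans
      (eq_of_subset_of_card_le inter_subset_right (by omega))
  omega

lemma card_le_of_maxRelevant (hX : IsComplex X) (hfin : X.Finite)
    (hmax : ∀ S, IsMaxRelevant X S d → ∃ σ : Finset V, σ.card = d + 1 ∧ ∀ η ∈ S, η ⊆ σ)
    {τ : Finset V} (hτ : τ ∈ X) : τ.card ≤ d + 1 := by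
  by_contra! hlt
  obtain ⟨τ', hτ'τ, hτ'⟩ : ∃ τ' ⊆ τ, τ'.card = d + 2 := exists_subset_card_eq (by omega)
  obtain ⟨a, b, ha, hb, hab⟩ := one_lt_card_iff.mp (show 1 < τ'.card by omega)
  have hface : ∀ c ∈ τ', τ'.erase c ∈ X ∧ (τ'.erase c).card = d + 1 := fun c hc =>
    ⟨hX.2 τ hτ _ ((erase_subset c τ').trans hτ'τ)
      (card_pos.mp (by rw [card_erase_of_mem hc]; omega)), by rw [card_erase_of_mem hc, hτ']; rfl⟩
  have hne : τ'.erase a ≠ τ'.erase b := fun h =>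
    notMem_erase a τ' (h ▸ mem_erase.2 ⟨hab, ha⟩)
  have hlt := card_inter_lt_of_maxRelevant hX hfin hmax (hface a ha).1 (hface b hb).1
    (hface a ha).2 (hface b hb).2 hne
  have hunion : (τ'.erase a ∪ τ'.erase b).card ≤ d + 2 :=
    hτ' ▸ card_le_card (union_subset (erase_subset a τ') (erase_subset b τ'))
  have := card_union_add_card_inter (τ'.erase a) (τ'.erase b)
  rw [(hface a ha).2, (hface b hb).2] at this
  omega

end SmallMaxRelevant

/-- `K` has dimension at most `k + 1`, and no two of its `(k+1)`-faces share a `k`-face. -/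
def NoSharedRidges (K : Set (Finset V)) (k : ℕ) : Prop :=
  (∀ τ ∈ K, τ.card ≤ k + 2) ∧
    ∀ τ₁ ∈ K, ∀ τ₂ ∈ K, τ₁.card = k + 2 → τ₂.card = k + 2 → τ₁ ≠ τ₂ → (τ₁ ∩ τ₂).card < k + 1

namespace NoSharedRidges

variable {K : Set (Finset V)} {k : ℕ}

lemma mono {K' : Set (Finset V)} (h : NoSharedRidges K k) (hK' : K' ⊆ K) :
    NoSharedRidges K' k :=
  ⟨fun τ hτ => h.1 τ (hK' hτ), fun τ₁ h₁ τ₂ h₂ => h.2 τ₁ (hK' h₁) τ₂ (hK' h₂)⟩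

lemma eq_or_eq_of_subset (h : NoSharedRidges K k) {σ τ η : Finset V} (hτ : τ ∈ K)
    (hτc : τ.card = k + 2) (hστ : σ ⊆ τ) (hσc : σ.card = k + 1) (hη : η ∈ K) (hση : σ ⊆ η) :
    η = σ ∨ η = τ := by
  have hση_card := card_le_card hση
  have hη_card := h.1 η hη
  by_cases hηc : η.card = k + 2
  · by_contra! hne
    have := h.2 η hη τ hτ hηc hτc hne.2
    have := card_le_card (subset_inter hση hστ)
    omega
  · exact .inl (eq_of_subset_of_card_le hση (by omega)).symm

lemma isFreeFace (h : NoSharedRidges K k) (hK : IsComplex K) {σ τ : Finset V} (hτ : τ ∈ K)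
    (hτc : τ.card = k + 2) (hστ : σ ⊆ τ) (hσc : σ.card = k + 1) : IsFreeFace K σ τ := by
  have hσ : σ ∈ K := hK.2 τ hτ σ hστ (card_pos.mp (by omega))
  have hσ_ne_τ : σ ≠ τ := by rintro rfl; omega
  refine ⟨hσ, ⟨hτ, fun η hη hτη => ?_⟩, hστ.ssubset_of_ne hσ_ne_τ, fun η hηmax hση => ?_⟩
  · exact (eq_of_subset_of_card_le hτη (by have := h.1 η hη; omega)).symm
  · rcases h.eq_or_eq_of_subset hτ hτc hστ hσc hηmax.1 hση with rfl | rfl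
    · exact absurd (hηmax.2 τ hτ hστ) hσ_ne_τ.symm
    · rfl

lemma isComplex_diff (h : NoSharedRidges K k) (hK : IsComplex K) {σ τ : Finset V} (hτ : τ ∈ K)
    (hτc : τ.card = k + 2) (hστ : σ ⊆ τ) (hσc : σ.card = k + 1) :
    IsComplex (K \ {η | σ ⊆ η ∧ η ⊆ τ}) := by
  refine ⟨fun η hη => hK.1 η hη.1, fun η ⟨hη, hητ⟩ ρ hρη hρ => ⟨hK.2 η hη ρ hρη hρ, ?_⟩⟩
  rintro ⟨hσρ, -⟩
  rcases h.eq_or_eq_of_subset hτ hτc hστ hσc hη (hσρ.trans hρη) with rfl | rfl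
  · exact hητ ⟨subset_rfl, hστ⟩
  · exact hητ ⟨hστ, subset_rfl⟩

theorem collapsible (h : NoSharedRidges K k) (hK : IsComplex K) (hfin : K.Finite) :
    Collapsible (k + 1) K := by
  induction hn : K.ncard using Nat.strong_induction_on generalizing K with
  | _ n ih =>
    by_cases htop : ∃ τ ∈ K, τ.card = k + 2
    · obtain ⟨τ, hτ, hτc⟩ := htop
      obtain ⟨a, ha⟩ := card_pos.mp (show 0 < τ.card by omega)
      have hσc : (τ.erase a).card = k + 1 := by rw [card_erase_of_mem ha, hτc]; rfl
      set K' := K \ {η | τ.erase a ⊆ η ∧ η ⊆ τ}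
      have hK'K : K' ⊂ K :=
        Set.sdiff_ssubset_left_iff.2 ⟨τ, hτ, erase_subset a τ, subset_rfl⟩
      obtain ⟨L, hK'L, hL⟩ := ih K'.ncard (hn ▸ Set.ncard_lt_ncard hK'K hfin) (h.mono hK'K.subset)
        (h.isComplex_diff hK hτ hτc (erase_subset a τ) hσc) (hfin.subset hK'K.subset) rfl
      exact ⟨L, .head ⟨_, τ, h.isFreeFace hK hτ hτc (erase_subset a τ) hσc, rfl⟩ hK'L, hL⟩
    · refine ⟨K, .refl, fun ρ hρ => ?_⟩
      have := h.1 ρ hρ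
      have : ρ.card ≠ k + 2 := fun hc => htop ⟨ρ, hρ, hc⟩
      omega

end NoSharedRidges

/-- If every maximal relevant `(k+1)`-subcomplex of a finite clique
complex `X` consists of a single `(k+1)`-dimensional face together with all of its
subfaces (so is supported on exactly `k + 2` vertices), then `X` is `(k+1)`-collapsible. -/
theorem collapsible_of_maxRelevant_single_face {V : Type*} [DecidableEq V]
    (k : ℕ) (X : Set (Finset V)) (hX : IsCliqueComplex X) (hfin : X.Finite)
    (h : ∀ S : Set (Finset V), IsMaxRelevant X S (k + 1) →
      ∃ σ : Finset V, σ.card = k + 2 ∧ S = {τ : Finset V | τ.Nonempty ∧ τ ⊆ σ}) :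
    Collapsible (k + 1) X := by
  have hmax : ∀ S, IsMaxRelevant X S (k + 1) →
      ∃ σ : Finset V, σ.card = k + 1 + 1 ∧ ∀ η ∈ S, η ⊆ σ := fun S hS =>
    (h S hS).imp fun σ ⟨hσ, hSσ⟩ => ⟨hσ, fun η hη => (hSσ ▸ hη).2⟩
  have hridges : NoSharedRidges X k :=
    ⟨fun _ hτ => card_le_of_maxRelevant hX.1 hfin hmax hτ,
      fun _ h₁ _ h₂ => card_inter_lt_of_maxRelevant hX.1 hfin hmax h₁ h₂⟩
  exact hridges.collapsible hX.1 hfin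
end
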